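/- Let M be a nonnegative integer and c a real number with c ≠ 2. Then the sum over all monic polynomials r ∈ 𝔽_q[t] with deg(r) ≤ M of (−1)^{deg(r)} φ(r)/q^{c·deg(r)} equals (1 + q^{1−c})/(1 + q^{2−c}) + (−1)^M · ((q−1)q^{1−c})/(1 + q^{2−c}) · q^{M(2−c)}. -/

import Mathlib

open Polynomial

/-- Euler's totient function on `𝔽_q[t]`: the number of units of `𝔽_q[t]/(r)`. -/
noncomputable def polyPhi {Fq : Type} [Field Fq] (r : Polynomial Fq) : ℕ :=
  Nat.card (Polynomial Fq ⧸ Ideal.span {r})ˣ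

/-!
Count the pairs `(r, a)` with `r` monic of degree `n` and `deg a < n`, `q^{2n}` of them, by the
monic `g = gcd(r, a)`: writing `r = g r'`, `a = g a'` gives `q^{2n} = ∑_{i + j = n} q^i C_j`, where
`C_j` counts the pairs of degree `j` with `a` coprime to `r`. As `φ(r)` counts the residues of
degree `< deg r` coprime to `r`, `C_j = ∑_{deg r = j} φ(r)`, and the convolution identity gives
`C_0 = 1`, `C_{n+1} = q^{2n+2} - q^{2n+1}`. With these values the alternating sum telescopes.
-/

open Finset.HasAntidiagonal

theorem Ideal.Quotient.isUnit_mk_span_singleton_iff {R : Type*} [CommRing R] {r a : R} :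
    IsUnit (Ideal.Quotient.mk (Ideal.span {r}) a) ↔ IsCoprime a r := by
  simp only [isUnit_iff_exists_inv, IsCoprime]
  constructor
  · rintro ⟨b', hb'⟩
    obtain ⟨b, rfl⟩ := Ideal.Quotient.mk_surjective b'
    rw [← map_mul, ← map_one (Ideal.Quotient.mk _), Ideal.Quotient.eq,
      Ideal.mem_span_singleton'] at hb'
    obtain ⟨c, hc⟩ := hb'
    exact ⟨b, -c, by linear_combination -hc⟩
  · rintro ⟨u, v, h⟩
    refine ⟨Ideal.Quotient.mk _ u, ?_⟩
    rw [← map_mul, ← map_one (Ideal.Quotient.mk _), Ideal.Quotient.eq,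
      Ideal.mem_span_singleton']
    exact ⟨-v, by linear_combination -h⟩

namespace Polynomial

theorem mk_modByMonic {R : Type*} [CommRing R] (r a : R[X]) :
    Ideal.Quotient.mk (Ideal.span {r}) (a %ₘ r) = Ideal.Quotient.mk (Ideal.span {r}) a := by
  rw [Ideal.Quotient.eq, Ideal.mem_span_singleton']
  exact ⟨-(a /ₘ r), by rw [modByMonic_eq_sub_mul_div a r]; ring⟩

theorem eq_of_mk_eq_mk_of_degree_lt {R : Type*} [CommRing R] [IsDomain R] {r a b : R[X]}
    (ha : a.degree < r.degree) (hb : b.degree < r.degree)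
    (h : Ideal.Quotient.mk (Ideal.span {r}) a = Ideal.Quotient.mk (Ideal.span {r}) b) :
    a = b := by
  rw [Ideal.Quotient.eq, Ideal.mem_span_singleton] at h
  exact sub_eq_zero.mp <| eq_zero_of_dvd_of_degree_lt h <|
    (degree_sub_le a b).trans_lt (max_lt ha hb)

theorem Monic.degree_mul_lt_iff {R : Type*} [CommSemiring R] [Nontrivial R] {g a : R[X]}
    (hg : g.Monic) {m : ℕ} : (g * a).degree < (g.natDegree + m : ℕ) ↔ a.degree < m := by
  rw [mul_comm, hg.degree_mul, degree_eq_natDegree hg.ne_zero, Nat.cast_add, add_comm a.degree,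
    WithBot.add_lt_add_iff_left (WithBot.natCast_ne_bot _)]

section Field

variable {K : Type*} [Field K]

theorem Monic.gcd_mul_mul_of_isCoprime [DecidableEq K] {g r a : K[X]} (hg : g.Monic)
    (h : IsCoprime a r) : gcd (g * r) (g * a) = g := by
  have hgcd : gcd r a = 1 := by
    rw [← normalize_gcd, normalize_eq_one, gcd_isUnit_iff_isRelPrime]
    exact h.symm.isRelPrime
  rw [gcd_mul_left, hg.normalize_eq_self, hgcd, mul_one]

theorem Monic.exists_eq_mul_isCoprime {r : K[X]} (hr : r.Monic) (a : K[X]) :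
    ∃ g r' a', g.Monic ∧ r'.Monic ∧ IsCoprime a' r' ∧ r = g * r' ∧ a = g * a' := by
  classical
  obtain ⟨r', a', hr', ha', hu⟩ := extract_gcd r a
  have hg : (gcd r a).Monic := by
    rw [← normalize_gcd]
    exact monic_normalize (gcd_ne_zero_of_left hr.ne_zero)
  exact ⟨gcd r a, r', a', hg, hg.of_mul_monic_left (hr' ▸ hr),
    (gcd_isUnit_iff_isRelPrime.mp hu).isCoprime.symm, hr', ha'⟩

end Field

section FiniteField

variable (K : Type*) [Field K] [Fintype K]

theorem finite_degreeLT (n : ℕ) : (degreeLT K n : Set K[X]).Finite :=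
  Set.finite_coe_iff.mp <| .of_equiv _ (degreeLTEquiv K n).toEquiv.symm

noncomputable def degreeLTFinset (n : ℕ) : Finset K[X] := (finite_degreeLT K n).toFinset

variable {K} in
@[simp]
theorem mem_degreeLTFinset {n : ℕ} {p : K[X]} : p ∈ degreeLTFinset K n ↔ p.degree < n := by
  simp [degreeLTFinset, mem_degreeLT]

theorem card_degreeLTFinset (n : ℕ) : (degreeLTFinset K n).card = Fintype.card K ^ n := by
  rw [degreeLTFinset, ← Set.ncard_eq_toFinset_card _ (finite_degreeLT K n), ← Nat.card_coe_set_eq,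
    SetLike.coe_sort_coe, Nat.card_congr (degreeLTEquiv K n).toEquiv, Nat.card_fun,
    Nat.card_eq_fintype_card, Nat.card_eq_fintype_card, Fintype.card_fin]

noncomputable def monicOfNatDegree (n : ℕ) : Finset K[X] :=
  (degreeLTFinset K n).map (addRightEmbedding (X ^ n))

variable {K} in
theorem mem_monicOfNatDegree {n : ℕ} {p : K[X]} :
    p ∈ monicOfNatDegree K n ↔ p.Monic ∧ p.natDegree = n := by
  simp only [monicOfNatDegree, Finset.mem_map, mem_degreeLTFinset, addRightEmbedding_apply]
  constructor
  · rintro ⟨a, ha, rfl⟩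
    rw [← degree_X_pow (R := K) n] at ha
    exact ⟨(monic_X_pow n).add_of_right ha,
      by rw [natDegree_add_eq_right_of_degree_lt ha, natDegree_X_pow]⟩
  · rintro ⟨hp, rfl⟩
    refine ⟨p - X ^ p.natDegree, ?_, sub_add_cancel _ _⟩
    have hdeg : p.degree = p.natDegree := degree_eq_natDegree hp.ne_zero
    rw [← hdeg]
    exact degree_sub_lt_left (by rw [hdeg, degree_X_pow]) hp.ne_zero
      (by rw [hp.leadingCoeff, leadingCoeff_X_pow])

theorem card_monicOfNatDegree (n : ℕ) : (monicOfNatDegree K n).card = Fintype.card K ^ n := by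
  rw [monicOfNatDegree, Finset.card_map, card_degreeLTFinset]

open Classical in
noncomputable def coprimePairs (n : ℕ) : Finset (K[X] × K[X]) :=
  (monicOfNatDegree K n ×ˢ degreeLTFinset K n).filter fun p => IsCoprime p.2 p.1

variable {K} in
theorem mem_coprimePairs {n : ℕ} {p : K[X] × K[X]} :
    p ∈ coprimePairs K n ↔
      (p.1.Monic ∧ p.1.natDegree = n) ∧ p.2.degree < n ∧ IsCoprime p.2 p.1 := by
  classical
  simp [coprimePairs, mem_monicOfNatDegree, and_assoc]

theorem card_monicOfNatDegree_product_degreeLTFinset (n : ℕ) :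
    (monicOfNatDegree K n ×ˢ degreeLTFinset K n).card =
      ∑ p ∈ antidiagonal n, (monicOfNatDegree K p.1).card * (coprimePairs K p.2).card := by
  classical
  simp_rw [← Finset.card_product]
  rw [← Finset.card_sigma]
  symm
  refine Finset.card_bij (fun x _ => (x.2.1 * x.2.2.1, x.2.1 * x.2.2.2)) ?_ ?_ ?_
  · rintro ⟨⟨i, j⟩, g, r, a⟩ hx
    simp only [Finset.mem_sigma, mem_antidiagonal, Finset.mem_product, mem_monicOfNatDegree,
      mem_coprimePairs, mem_degreeLTFinset] at hx ⊢
    obtain ⟨rfl, ⟨hg, rfl⟩, ⟨hr, rfl⟩, ha, -⟩ := hx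
    exact ⟨⟨hg.mul hr, hg.natDegree_mul hr⟩, hg.degree_mul_lt_iff.mpr ha⟩
  · rintro ⟨⟨i₁, j₁⟩, g₁, r₁, a₁⟩ hx₁ ⟨⟨i₂, j₂⟩, g₂, r₂, a₂⟩ hx₂ h
    simp only [Finset.mem_sigma, mem_antidiagonal, Finset.mem_product, mem_monicOfNatDegree,
      mem_coprimePairs] at hx₁ hx₂
    obtain ⟨-, ⟨hg₁, rfl⟩, ⟨-, rfl⟩, -, hc₁⟩ := hx₁
    obtain ⟨-, ⟨hg₂, rfl⟩, ⟨-, rfl⟩, -, hc₂⟩ := hx₂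
    obtain ⟨hr, ha⟩ := Prod.mk.inj h
    obtain rfl : g₁ = g₂ := by
      rw [← hg₁.gcd_mul_mul_of_isCoprime hc₁, ← hg₂.gcd_mul_mul_of_isCoprime hc₂, hr, ha]
    obtain rfl := mul_left_cancel₀ hg₁.ne_zero hr
    obtain rfl := mul_left_cancel₀ hg₁.ne_zero ha
    rfl
  · rintro ⟨r, a⟩ hx
    simp only [Finset.mem_product, mem_monicOfNatDegree, mem_degreeLTFinset] at hx
    obtain ⟨⟨hr, rfl⟩, ha⟩ := hx
    obtain ⟨g, r', a', hg, hr', hc, rfl, rfl⟩ := hr.exists_eq_mul_isCoprime a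
    refine ⟨⟨(g.natDegree, r'.natDegree), g, r', a'⟩, ?_, rfl⟩
    simp only [Finset.mem_sigma, mem_antidiagonal, Finset.mem_product,
      mem_monicOfNatDegree, mem_coprimePairs, and_true]
    rw [hg.natDegree_mul hr'] at ha ⊢
    exact ⟨rfl, hg, hr', hg.degree_mul_lt_iff.mp ha, hc⟩

theorem sum_antidiagonal_pow_mul_card_coprimePairs (n : ℕ) :
    ∑ p ∈ antidiagonal n, Fintype.card K ^ p.1 * (coprimePairs K p.2).card =
      Fintype.card K ^ n * Fintype.card K ^ n := by
  have h := card_monicOfNatDegree_product_degreeLTFinset K n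
  simp only [Finset.card_product, card_monicOfNatDegree, card_degreeLTFinset] at h
  exact h.symm

theorem card_coprimePairs_zero : (coprimePairs K 0).card = 1 := by
  simpa using sum_antidiagonal_pow_mul_card_coprimePairs K 0

theorem card_coprimePairs_succ (n : ℕ) :
    (coprimePairs K (n + 1)).card + Fintype.card K ^ (2 * n + 1) =
      Fintype.card K ^ (2 * n + 2) := by
  have h := sum_antidiagonal_pow_mul_card_coprimePairs K (n + 1)
  have hshift : ∑ p ∈ antidiagonal n, Fintype.card K ^ (p.1 + 1) * (coprimePairs K p.2).card =
      Fintype.card K * (Fintype.card K ^ n * Fintype.card K ^ n) := by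
    rw [← sum_antidiagonal_pow_mul_card_coprimePairs, Finset.mul_sum]
    exact Finset.sum_congr rfl fun p _ => by ring
  rw [Finset.Nat.sum_antidiagonal_succ, hshift] at h
  convert h using 1 <;> ring

end FiniteField

section Totient

variable {K : Type} [Field K] [Fintype K]

open Classical in
theorem polyPhi_eq_card_filter_isCoprime {r : K[X]} (hr : r.Monic) :
    polyPhi r = ((degreeLTFinset K r.natDegree).filter (IsCoprime · r)).card := by
  classical
  set s := (degreeLTFinset K r.natDegree).filter (IsCoprime · r)
  have hdeg : r.degree = r.natDegree := degree_eq_natDegree hr.ne_zero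
  have hmem {a : K[X]} : a ∈ s ↔ a.degree < r.degree ∧ IsCoprime a r := by
    rw [Finset.mem_filter, mem_degreeLTFinset, hdeg]
  have hbij : Set.BijOn (Ideal.Quotient.mk (Ideal.span {r})) s {x | IsUnit x} := by
    refine ⟨fun a ha => Ideal.Quotient.isUnit_mk_span_singleton_iff.mpr (hmem.mp ha).2,
      fun a ha b hb h => eq_of_mk_eq_mk_of_degree_lt (hmem.mp ha).1 (hmem.mp hb).1 h, ?_⟩
    rintro x (hx : IsUnit x)
    obtain ⟨a, rfl⟩ := Ideal.Quotient.mk_surjective x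
    rw [← mk_modByMonic] at hx ⊢
    exact ⟨a %ₘ r, hmem.mpr ⟨degree_modByMonic_lt a hr,
      Ideal.Quotient.isUnit_mk_span_singleton_iff.mp hx⟩, rfl⟩
  rw [polyPhi, Nat.card_congr Submonoid.unitsTypeEquivIsUnitSubmonoid.toEquiv]
  exact (Nat.card_congr hbij.equiv).symm.trans (Nat.card_eq_finsetCard s)

variable (K)

theorem sum_polyPhi_monicOfNatDegree (n : ℕ) :
    ∑ r ∈ monicOfNatDegree K n, polyPhi r = (coprimePairs K n).card := by
  classical
  rw [coprimePairs, Finset.card_filter, Finset.sum_product]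
  refine Finset.sum_congr rfl fun r hr => ?_
  obtain ⟨hmonic, rfl⟩ := mem_monicOfNatDegree.mp hr
  rw [polyPhi_eq_card_filter_isCoprime hmonic, Finset.card_filter]

theorem sum_polyPhi_monicOfNatDegree_zero :
    (∑ r ∈ monicOfNatDegree K 0, (polyPhi r : ℝ)) = 1 := by
  rw [← Nat.cast_sum, sum_polyPhi_monicOfNatDegree, card_coprimePairs_zero, Nat.cast_one]

theorem sum_polyPhi_monicOfNatDegree_succ (n : ℕ) :
    (∑ r ∈ monicOfNatDegree K (n + 1), (polyPhi r : ℝ)) =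
      (Fintype.card K - 1) * (Fintype.card K : ℝ) ^ (2 * n + 1) := by
  have h := card_coprimePairs_succ K n
  rw [← sum_polyPhi_monicOfNatDegree] at h
  have h' : ((∑ r ∈ monicOfNatDegree K (n + 1), polyPhi r : ℕ) : ℝ) +
      (Fintype.card K : ℝ) ^ (2 * n + 1) = (Fintype.card K : ℝ) ^ (2 * n + 2) := by
    exact_mod_cast h
  push_cast at h'
  linear_combination h'

end Totient

end Polynomial

theorem Real.sum_range_neg_one_pow_mul_div_rpow {q c : ℝ} (hq : 0 < q) {S : ℕ → ℝ}
    (h0 : S 0 = 1) (hS : ∀ n, S (n + 1) = (q - 1) * q ^ (2 * n + 1)) (M : ℕ) :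
    ∑ n ∈ Finset.range (M + 1), (-1) ^ n * S n / q ^ (c * n) =
      (1 + q ^ (1 - c)) / (1 + q ^ (2 - c)) +
        (-1) ^ M * ((q - 1) * q ^ (1 - c) / (1 + q ^ (2 - c))) * q ^ ((M : ℝ) * (2 - c)) := by
  have hpos : 0 < 1 + q ^ (2 - c) := by positivity
  induction M with
  | zero =>
    have hq2 : q ^ (2 - c) = q * q ^ (1 - c) := by
      rw [show 2 - c = 1 + (1 - c) by ring, Real.rpow_add hq, Real.rpow_one]
    rw [zero_add, Finset.sum_range_one, h0]
    simp only [pow_zero, CharP.cast_eq_zero, mul_zero, zero_mul, Real.rpow_zero, div_one, mul_one]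
    field_simp
    linear_combination hq2
  | succ M ih =>
    have hterm :
        q ^ (2 * M + 1) / q ^ (c * ↑(M + 1)) = q ^ (1 - c) * q ^ ((M : ℝ) * (2 - c)) := by
      rw [← Real.rpow_natCast, ← Real.rpow_sub hq, ← Real.rpow_add hq]
      push_cast
      ring_nf
    have hterm' : (-1) ^ (M + 1) * ((q - 1) * q ^ (2 * M + 1)) / q ^ (c * ↑(M + 1)) =
        (-1) ^ (M + 1) * (q - 1) * (q ^ (1 - c) * q ^ ((M : ℝ) * (2 - c))) := by
      rw [← hterm]
      ring
    have hgeom : q ^ (((M + 1 : ℕ) : ℝ) * (2 - c)) = q ^ ((M : ℝ) * (2 - c)) * q ^ (2 - c) := by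
      rw [← Real.rpow_add hq]
      push_cast
      ring_nf
    rw [Finset.sum_range_succ, ih, hS, hterm', hgeom, pow_succ]
    field_simp
    ring

theorem phi_alt_sum_rpow_general (Fq : Type) [Field Fq] [Fintype Fq] (M : ℕ) (c : ℝ) :
    ∑ᶠ r ∈ {r : Polynomial Fq | r.Monic ∧ r.natDegree ≤ M},
        (-1 : ℝ) ^ r.natDegree * (polyPhi r : ℝ) / (Fintype.card Fq : ℝ) ^ (c * r.natDegree) =
      (1 + (Fintype.card Fq : ℝ) ^ ((1 : ℝ) - c)) /
          (1 + (Fintype.card Fq : ℝ) ^ ((2 : ℝ) - c)) +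
        (-1 : ℝ) ^ M *
          (((Fintype.card Fq : ℝ) - 1) * (Fintype.card Fq : ℝ) ^ ((1 : ℝ) - c) /
            (1 + (Fintype.card Fq : ℝ) ^ ((2 : ℝ) - c))) *
          (Fintype.card Fq : ℝ) ^ ((M : ℝ) * (2 - c)) := by
  classical
  have hset : {r : Fq[X] | r.Monic ∧ r.natDegree ≤ M} =
      ↑((Finset.range (M + 1)).biUnion (monicOfNatDegree Fq)) := by
    ext r
    simp [mem_monicOfNatDegree]
  have hdisj : (↑(Finset.range (M + 1)) : Set ℕ).PairwiseDisjoint (monicOfNatDegree Fq) :=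
    fun i _ j _ hij => Finset.disjoint_left.mpr fun r hi hj =>
      hij ((mem_monicOfNatDegree.mp hi).2.symm.trans (mem_monicOfNatDegree.mp hj).2)
  rw [hset, finsum_mem_coe_finset, Finset.sum_biUnion hdisj]
  have hfiber (n : ℕ) : ∑ r ∈ monicOfNatDegree Fq n,
      (-1 : ℝ) ^ r.natDegree * (polyPhi r : ℝ) / (Fintype.card Fq : ℝ) ^ (c * r.natDegree) =
      (-1 : ℝ) ^ n * (∑ r ∈ monicOfNatDegree Fq n, (polyPhi r : ℝ)) /
        (Fintype.card Fq : ℝ) ^ (c * n) := by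
    rw [Finset.mul_sum, Finset.sum_div]
    exact Finset.sum_congr rfl fun r hr => by rw [(mem_monicOfNatDegree.mp hr).2]
  simp only [hfiber]
  exact Real.sum_range_neg_one_pow_mul_div_rpow (by exact_mod_cast Fintype.card_pos)
    (sum_polyPhi_monicOfNatDegree_zero Fq) (sum_polyPhi_monicOfNatDegree_succ Fq) M

/-- For `M ≥ 0` and real `c ≠ 2`, the sum over monic `r` with `deg r ≤ M` of
`(-1)^{deg r}·φ(r)/q^{c·deg r}` equals
`(1+q^{1-c})/(1+q^{2-c}) + (-1)^M·(q-1)q^{1-c}/(1+q^{2-c})·q^{M(2-c)}`. -/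
theorem phi_alt_sum_rpow (Fq : Type) [Field Fq] [Fintype Fq] (M : ℕ) (c : ℝ) (hc : c ≠ 2) :
    ∑ᶠ r ∈ {r : Polynomial Fq | r.Monic ∧ r.natDegree ≤ M},
        (-1 : ℝ) ^ r.natDegree * (polyPhi r : ℝ) / (Fintype.card Fq : ℝ) ^ (c * r.natDegree) =
      (1 + (Fintype.card Fq : ℝ) ^ ((1 : ℝ) - c)) /
          (1 + (Fintype.card Fq : ℝ) ^ ((2 : ℝ) - c)) +
        (-1 : ℝ) ^ M *
          (((Fintype.card Fq : ℝ) - 1) * (Fintype.card Fq : ℝ) ^ ((1 : ℝ) - c) /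
            (1 + (Fintype.card Fq : ℝ) ^ ((2 : ℝ) - c))) *
          (Fintype.card Fq : ℝ) ^ ((M : ℝ) * (2 - c)) :=
  phi_alt_sum_rpow_general Fq M c
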